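/- arXiv:2504.18879 — 3 statements merged into one kernel-verified Lean document; each statement's English description precedes it below -/
import Mathlib

section
/- (Chen's formula) For all a, b ∈ ℕ, one has in K_∞: ζ_A(a)·ζ_A(b) = ζ_A(a,b) + ζ_A(b,a) + ζ_A(a+b) + Σ_{i+j=a+b, i,j ≥ 1, (q−1)∣j} Δ^{i,j}_{a,b}·ζ_A(i,j). -/
open Polynomial

noncomputable def monicOf (Fq : Type) [Field Fq] (i : ℕ) (c : Fin i → Fq) : Fq[X] :=
  X ^ i + ∑ j : Fin i, C (c j) * X ^ (j : ℕ)

/-- The truncated power sum `S_{<d}(𝔞) = ∑_{i<d} S_i(𝔞)`. -/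
noncomputable def Slt (Fq : Type) [Field Fq] [Fintype Fq] : List ℕ → ℕ → RatFunc Fq
  | [], _ => 1
  | a :: rest, d =>
      ∑ i ∈ Finset.range d, ∑ c : Fin i → Fq,
        ((algebraMap Fq[X] (RatFunc Fq) (monicOf Fq i c))⁻¹) ^ a * Slt Fq rest i

/-- Thakur's power sum `S_d(𝔞)`. -/
noncomputable def Sd (Fq : Type) [Field Fq] [Fintype Fq] (l : List ℕ) (d : ℕ) : RatFunc Fq :=
  Slt Fq l (d + 1) - Slt Fq l d

/-- The canonical inclusion of `K = Fq(θ)` into its completion `K_∞` at the infinite place. -/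
noncomputable def toInfty (Fq : Type) [Field Fq] [Fintype Fq] [DecidableEq (RatFunc Fq)] :
    RatFunc Fq →+* RatFunc.CompletionAtInfty Fq :=
  letI := RatFunc.inftyValued Fq
  UniformSpace.Completion.coeRingHom

/-- Thakur's multiple zeta value `ζ_A(𝔞) = ∑_{d=0}^∞ S_d(𝔞) ∈ K_∞`. -/
noncomputable def zetaA (Fq : Type) [Field Fq] [Fintype Fq] [DecidableEq (RatFunc Fq)]
    (l : List ℕ) : RatFunc.CompletionAtInfty Fq :=
  ∑' d : ℕ, toInfty Fq (Sd Fq l d)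

/-- `Δ^{i,j}_{a,b} ∈ 𝔽_p`. -/
def Del (p : ℕ) (a b i j : ℕ) : ZMod p :=
  (-1 : ZMod p) ^ (a - 1) * ((j - 1).choose (a - 1) : ZMod p) +
    (-1 : ZMod p) ^ (b - 1) * ((j - 1).choose (b - 1) : ZMod p)

instance ratFuncCharP (Fq : Type) [Field Fq] (p : ℕ) [CharP Fq p] :
    CharP (RatFunc Fq) p :=
  charP_of_injective_algebraMap (algebraMap Fq (RatFunc Fq)).injective p

instance fqtInftyCharP (Fq : Type) [Field Fq] [Fintype Fq] [DecidableEq (RatFunc Fq)]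
    (p : ℕ) [CharP Fq p] : CharP (RatFunc.CompletionAtInfty Fq) p :=
  charP_of_injective_ringHom (toInfty Fq).injective p

/-!
Both sides are limits in `K_∞` of the truncations `S_{<N}` of the defining series (the terms
satisfy `|S_d| ≤ q^{-d}` and `K_∞` is complete and nonarchimedean), so it suffices to prove the
identity for `S_{<N}`. Splitting `S_{<N}(a) S_{<N}(b)` by degrees leaves `S_{<N}(a,b) + S_{<N}(b,a)`
plus the diagonal terms `S_d(a) S_d(b)`. For distinct monic `f, g` of degree `d`, expanding
`f^{-a} g^{-b}` in powers of `1/(g - f)` turns the off-diagonal part of `S_d(a) S_d(b)` into sums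
of `(g - f)^{-m}` over `g ≠ f`; as `g - f` runs through the nonzero polynomials of degree `< d`,
each such sum is `∑_{u ∈ 𝔽_q^×} u^{-m} · S_{<d}(m) = -[q - 1 ∣ m] S_{<d}(m)`.
-/

open Finset Filter Topology WithZero

section PartialFractions

variable {R : Type*} [CommRing R]

def partialFracSum (c n : ℕ) (h u : R) : R :=
  ∑ k ∈ range n, (-1) ^ k * (c.multichoose k : R) * h ^ (c + k) * u ^ (n - k)

@[simp]
lemma partialFracSum_zero_right (c : ℕ) (h u : R) : partialFracSum c 0 h u = 0 := by
  simp [partialFracSum]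

lemma partialFracSum_zero_left {n : ℕ} (hn : n ≠ 0) (h u : R) :
    partialFracSum 0 n h u = u ^ n := by
  obtain ⟨n, rfl⟩ := Nat.exists_eq_succ_of_ne_zero hn
  simp [partialFracSum, sum_range_succ']

lemma partialFracSum_succ_succ (c n : ℕ) (h u : R) :
    partialFracSum (c + 1) (n + 1) h u =
      h * partialFracSum c (n + 1) h u - h * partialFracSum (c + 1) n h u := by
  simp only [partialFracSum, mul_sum]
  conv_lhs => rw [sum_range_succ']
  conv_rhs => arg 1; rw [sum_range_succ']
  simp only [Nat.multichoose_succ_succ, Nat.multichoose_zero_right, Nat.cast_add,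
    Nat.add_sub_add_right]
  rw [sub_eq_add_neg, ← sum_neg_distrib, add_right_comm _ _ (∑ k ∈ range n, _ : R),
    ← sum_add_distrib]
  congr 1
  · refine sum_congr rfl fun k _ => ?_
    ring
  · ring

/-- The coefficients of `h ^ m` count the lattice paths from `(a, b)` to the axes along the
recursion `u ^ a * w ^ b = h * (u ^ a * w ^ (b - 1) - u ^ (a - 1) * w ^ b)`. -/
theorem pow_mul_pow_eq_partialFracSum {u w h : R} (huw : u * w = h * (u - w)) :
    ∀ a b : ℕ, a + b ≠ 0 →
      u ^ a * w ^ b = partialFracSum b a h u + partialFracSum a b (-h) w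
  | 0, b, hb => by simp [partialFracSum_zero_left (by simpa using hb)]
  | a + 1, 0, _ => by simp [partialFracSum_zero_left]
  | a + 1, b + 1, _ => by
    have ih₁ := pow_mul_pow_eq_partialFracSum huw (a + 1) b (by omega)
    have ih₂ := pow_mul_pow_eq_partialFracSum huw a (b + 1) (by omega)
    rw [partialFracSum_succ_succ, partialFracSum_succ_succ]
    linear_combination h * ih₁ - h * ih₂ + u ^ a * w ^ b * huw

end PartialFractions

namespace Valued

theorem nonarchimedeanAddGroup {R Γ₀ : Type*} [Ring R] [LinearOrderedCommGroupWithZero Γ₀]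
    [Valued R Γ₀] : NonarchimedeanAddGroup R where
  is_nonarchimedean U hU := by
    obtain ⟨γ, -, hγ⟩ := (hasBasis_nhds_zero R Γ₀).mem_iff.mp hU
    exact ⟨⟨v.restrict.ltAddSubgroup γ, isOpen_ball R γ.1⟩, hγ⟩

theorem tendsto_zero_of_v_le_exp_neg {R : Type*} [Ring R] [Valued R ℤᵐ⁰] {f : ℕ → R}
    (hf : ∀ n, v (f n) ≤ exp (-(n : ℤ))) : Tendsto f atTop (𝓝 0) := by
  rw [(hasBasis_nhds_zero R ℤᵐ⁰).tendsto_right_iff]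
  intro γ _
  simp only [Set.mem_ofPred_eq, Valuation.restrict_lt_iff_lt_embedding]
  set r := MonoidWithZeroHom.ValueGroup₀.embedding γ.1
  have hr : r ≠ 0 := by simp [r]
  filter_upwards [eventually_gt_atTop (-log r).toNat] with n hn
  refine (hf n).trans_lt ?_
  rw [← exp_log hr, exp_lt_exp]
  omega

end Valued

section InversePowerSums

variable {E ι : Type*} [Field E] [Fintype ι] [DecidableEq ι]

lemma sum_sum_erase_comm {M : Type*} [AddCommMonoid M] (F : ι → ι → M) :
    ∑ i, ∑ j ∈ univ.erase i, F i j = ∑ i, ∑ j ∈ univ.erase i, F j i :=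
  sum_comm' fun i j => by simp [ne_comm]

theorem sum_sum_erase_partialFracSum (x : ι → E) {U : ℕ → E}
    (hU : ∀ i m, m ≠ 0 → ∑ j ∈ univ.erase i, ((x j - x i)⁻¹) ^ m = U m) {c : ℕ} (hc : c ≠ 0)
    (n : ℕ) :
    ∑ i, ∑ j ∈ univ.erase i, partialFracSum c n (x j - x i)⁻¹ (x i)⁻¹ =
      ∑ k ∈ range n, (-1) ^ k * (c.multichoose k : E) * U (c + k) * ∑ i, (x i)⁻¹ ^ (n - k) := by
  simp only [partialFracSum]
  rw [sum_congr rfl fun i _ => sum_comm, sum_comm]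
  refine sum_congr rfl fun k _ => ?_
  rw [mul_sum]
  refine sum_congr rfl fun i _ => ?_
  rw [← hU i (c + k) (by omega), mul_sum, sum_mul]

theorem sum_inv_pow_mul_sum_inv_pow {x : ι → E} (hx : ∀ i, x i ≠ 0)
    (hinj : Function.Injective x) {U : ℕ → E}
    (hU : ∀ i m, m ≠ 0 → ∑ j ∈ univ.erase i, ((x j - x i)⁻¹) ^ m = U m) {a b : ℕ}
    (ha : a ≠ 0) (hb : b ≠ 0) :
    (∑ i, (x i)⁻¹ ^ a) * ∑ i, (x i)⁻¹ ^ b =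
      ∑ i, (x i)⁻¹ ^ (a + b) +
        (∑ k ∈ range a, (-1) ^ k * (b.multichoose k : E) * U (b + k) * ∑ i, (x i)⁻¹ ^ (a - k) +
          ∑ k ∈ range b, (-1) ^ k * (a.multichoose k : E) * U (a + k) *
            ∑ i, (x i)⁻¹ ^ (b - k)) := by
  have hpf : ∀ i, ∀ j ∈ univ.erase i, (x i)⁻¹ ^ a * (x j)⁻¹ ^ b =
      partialFracSum b a (x j - x i)⁻¹ (x i)⁻¹ + partialFracSum a b (x i - x j)⁻¹ (x j)⁻¹ := by
    intro i j hj
    have hij : x j - x i ≠ 0 := sub_ne_zero.2 (hinj.ne (ne_of_mem_erase hj))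
    rw [← neg_sub (x j), inv_neg]
    refine pow_mul_pow_eq_partialFracSum ?_ a b (by omega)
    field_simp [hx i, hx j, hij]
  calc (∑ i, (x i)⁻¹ ^ a) * ∑ i, (x i)⁻¹ ^ b
      = ∑ i, ((x i)⁻¹ ^ (a + b) + ∑ j ∈ univ.erase i, (x i)⁻¹ ^ a * (x j)⁻¹ ^ b) := by
        rw [sum_mul_sum]
        exact sum_congr rfl fun i _ => by rw [← add_sum_erase _ _ (mem_univ i), pow_add]
    _ = _ := by
        rw [sum_add_distrib, sum_congr rfl fun i _ => sum_congr rfl (hpf i)]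
        simp only [sum_add_distrib]
        rw [sum_sum_erase_partialFracSum x hU hb, sum_sum_erase_comm,
          sum_sum_erase_partialFracSum x hU ha]

end InversePowerSums

lemma sum_range_multichoose_mul {R : Type*} [Semiring R] {c : ℕ} (hc : c ≠ 0) (n : ℕ)
    (G : ℕ → R) :
    ∑ k ∈ range n, (c.multichoose k : R) * G (c + k) =
      ∑ j ∈ Ioo 0 (n + c), ((j - 1).choose (c - 1) : R) * G j := by
  symm
  rw [← sum_subset (s₁ := Ico c (c + n)) (fun j hj => by simp at hj ⊢; omega) fun j hj hj' => by
      simp at hj hj'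
      simp [Nat.choose_eq_zero_of_lt (by omega : j - 1 < c - 1)],
    sum_Ico_eq_sum_range, Nat.add_sub_cancel_left]
  refine sum_congr rfl fun k _ => ?_
  rw [Nat.multichoose_eq, show c + k - 1 = c - 1 + k by omega, Nat.choose_symm_add]

lemma sum_eq_add_sum_units {K M : Type*} [GroupWithZero K] [Fintype K] [DecidableEq K]
    [AddCommMonoid M] (g : K → M) : ∑ a, g a = g 0 + ∑ u : Kˣ, g u := by
  rw [← add_sum_erase _ _ (mem_univ 0)]
  congr 1
  refine sum_bij' (fun a ha => Units.mk0 a (ne_of_mem_erase ha)) (fun u _ => (u : K))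
    ?_ ?_ ?_ ?_ ?_ <;> simp

section MonicPolynomials

variable {Fq : Type} [Field Fq]

noncomputable def polyOfCoeffs (d : ℕ) (e : Fin d → Fq) : Fq[X] :=
  ∑ j : Fin d, C (e j) * X ^ (j : ℕ)

lemma monicOf_eq (d : ℕ) (c : Fin d → Fq) : monicOf Fq d c = X ^ d + polyOfCoeffs d c := rfl

lemma coeff_polyOfCoeffs (d : ℕ) (e : Fin d → Fq) (j : Fin d) :
    (polyOfCoeffs d e).coeff j = e j := by
  simp [polyOfCoeffs, coeff_C_mul, coeff_X_pow, Fin.val_inj]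

lemma polyOfCoeffs_injective (d : ℕ) : Function.Injective (polyOfCoeffs (Fq := Fq) d) :=
  fun e e' h => funext fun j => by simpa [coeff_polyOfCoeffs] using congrArg (coeff · j) h

lemma polyOfCoeffs_sub (d : ℕ) (e e' : Fin d → Fq) :
    polyOfCoeffs d (e - e') = polyOfCoeffs d e - polyOfCoeffs d e' := by
  simp [polyOfCoeffs, sub_mul]

lemma polyOfCoeffs_smul (d : ℕ) (a : Fq) (e : Fin d → Fq) :
    polyOfCoeffs d (a • e) = C a * polyOfCoeffs d e := by
  simp [polyOfCoeffs, mul_sum, mul_assoc]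

lemma polyOfCoeffs_snoc (d : ℕ) (e : Fin d → Fq) (a : Fq) :
    polyOfCoeffs (d + 1) (Fin.snoc e a) = C a * X ^ d + polyOfCoeffs d e := by
  simp [polyOfCoeffs, Fin.sum_univ_castSucc, add_comm]

lemma degree_polyOfCoeffs_lt (d : ℕ) (e : Fin d → Fq) : (polyOfCoeffs d e).degree < d :=
  (degree_sum_le _ _).trans_lt <| (Finset.sup_lt_iff (WithBot.bot_lt_coe d)).2 fun j _ =>
    (degree_C_mul_X_pow_le _ _).trans_lt (WithBot.coe_lt_coe.2 j.isLt)

lemma monic_monicOf (d : ℕ) (c : Fin d → Fq) : (monicOf Fq d c).Monic :=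
  monicOf_eq d c ▸
  (monic_X_pow d).add_of_left (by simpa using degree_polyOfCoeffs_lt d c)

lemma natDegree_monicOf (d : ℕ) (c : Fin d → Fq) : (monicOf Fq d c).natDegree = d := by
  rw [monicOf_eq, natDegree_add_eq_left_of_degree_lt (by simpa using degree_polyOfCoeffs_lt d c),
    natDegree_X_pow]

lemma monicOf_sub_monicOf (d : ℕ) (c c' : Fin d → Fq) :
    monicOf Fq d c' - monicOf Fq d c = polyOfCoeffs d (c' - c) := by
  rw [monicOf_eq, monicOf_eq, polyOfCoeffs_sub]
  ring

lemma monicOf_injective (d : ℕ) : Function.Injective (monicOf Fq d) :=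
  fun _ _ h => polyOfCoeffs_injective d (add_left_cancel h)

/-- A polynomial of degree `< d` is zero or a unit times a monic polynomial of degree `k < d`. -/
theorem sum_polyOfCoeffs [Fintype Fq] [DecidableEq Fq] {M : Type*} [AddCommMonoid M]
    (f : Fq[X] → M) : ∀ d : ℕ, ∑ e : Fin d → Fq, f (polyOfCoeffs d e) =
      f 0 + ∑ k ∈ range d, ∑ u : Fqˣ, ∑ c : Fin k → Fq, f (C (u : Fq) * monicOf Fq k c)
  | 0 => by simp [polyOfCoeffs]
  | d + 1 => by
    rw [← (Fin.snocEquiv fun _ => Fq).sum_comp, Fintype.sum_prod_type]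
    simp only [Fin.snocEquiv, Equiv.coe_fn_mk, polyOfCoeffs_snoc]
    rw [sum_eq_add_sum_units, sum_range_succ, ← add_assoc]
    congr 1
    · simpa using sum_polyOfCoeffs f d
    · refine sum_congr rfl fun u _ => ?_
      rw [← Equiv.sum_comp (MulAction.toPerm u : (Fin d → Fq) ≃ _)]
      refine sum_congr rfl fun c _ => ?_
      rw [MulAction.toPerm_apply, Units.smul_def, polyOfCoeffs_smul, monicOf_eq, mul_add]

end MonicPolynomials

section ThakurPowerSums

variable {Fq : Type} [Field Fq] [Fintype Fq]

lemma Sd_cons (n : ℕ) (l : List ℕ) (d : ℕ) : Sd Fq (n :: l) d = Sd Fq [n] d * Slt Fq l d := by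
  simp [Sd, Slt, sum_range_succ, sum_mul]

lemma Sd_singleton (n d : ℕ) :
    Sd Fq [n] d = ∑ c : Fin d → Fq, (algebraMap Fq[X] (RatFunc Fq) (monicOf Fq d c))⁻¹ ^ n := by
  simp [Sd, Slt, sum_range_succ]

lemma sum_range_Sd (n : ℕ) (l : List ℕ) (N : ℕ) :
    ∑ d ∈ range N, Sd Fq (n :: l) d = Slt Fq (n :: l) N := by
  simp only [Sd]
  rw [sum_range_sub (Slt Fq (n :: l))]
  simp [Slt]

lemma sum_units_inv_pow [DecidableEq Fq] (m : ℕ) :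
    ∑ u : Fqˣ, ((u : Fq)⁻¹) ^ m = if Fintype.card Fq - 1 ∣ m then -1 else 0 := by
  rw [← FiniteField.sum_pow_units Fq m]
  exact Fintype.sum_equiv (Equiv.inv Fqˣ) _ _ fun u => by simp

theorem sum_polyOfCoeffs_inv_pow {m : ℕ} (hm : m ≠ 0) (d : ℕ) :
    ∑ e : Fin d → Fq, (algebraMap Fq[X] (RatFunc Fq) (polyOfCoeffs d e))⁻¹ ^ m =
      (if Fintype.card Fq - 1 ∣ m then -1 else 0) * Slt Fq [m] d := by
  classical
  rw [sum_polyOfCoeffs (fun g => (algebraMap Fq[X] (RatFunc Fq) g)⁻¹ ^ m), map_zero, inv_zero,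
    zero_pow hm, zero_add, ← sum_range_Sd, mul_sum]
  refine sum_congr rfl fun k _ => ?_
  simp only [map_mul, RatFunc.algebraMap_C, mul_inv, mul_pow, ← sum_mul_sum, Sd_singleton,
    ← map_inv₀, ← map_pow, ← map_sum, sum_units_inv_pow, apply_ite, map_neg, map_one, map_zero]

theorem sum_erase_inv_monicOf_sub_pow [DecidableEq Fq] {m : ℕ} (hm : m ≠ 0) (d : ℕ)
    (c : Fin d → Fq) :
    ∑ c' ∈ univ.erase c, (algebraMap Fq[X] (RatFunc Fq) (monicOf Fq d c') -
        algebraMap Fq[X] (RatFunc Fq) (monicOf Fq d c))⁻¹ ^ m =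
      (if Fintype.card Fq - 1 ∣ m then -1 else 0) * Slt Fq [m] d := by
  simp only [← map_sub, monicOf_sub_monicOf]
  rw [sum_erase _ (by simp [zero_pow hm, polyOfCoeffs])]
  exact (Fintype.sum_equiv (Equiv.subRight c) _ _ fun _ => rfl).trans
    (sum_polyOfCoeffs_inv_pow hm d)

lemma neg_one_pow_eq_one_of_card_sub_one_dvd {A : Type*} [Ring A] [Algebra Fq A] {j : ℕ}
    (hj : Fintype.card Fq - 1 ∣ j) : (-1 : A) ^ j = 1 := by
  obtain ⟨k, rfl⟩ := hj
  rw [pow_mul, ← map_one (algebraMap Fq A), ← map_neg, ← map_pow,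
    FiniteField.pow_card_sub_one_eq_one _ (neg_ne_zero.2 one_ne_zero), map_one, one_pow]

lemma castHom_Del {R : Type*} [Ring R] (p : ℕ) [CharP R p] (a b i j : ℕ) :
    ZMod.castHom (dvd_refl p) R (Del p a b i j) =
      (-1) ^ (a - 1) * ((j - 1).choose (a - 1) : R) +
        (-1) ^ (b - 1) * ((j - 1).choose (b - 1) : R) := by
  simp [Del]

end ThakurPowerSums

lemma sum_range_mul_sum_range {R : Type*} [CommRing R] (f g : ℕ → R) (N : ℕ) :
    (∑ d ∈ range N, f d) * ∑ d ∈ range N, g d =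
      ∑ d ∈ range N, f d * ∑ e ∈ range d, g e + ∑ d ∈ range N, g d * ∑ e ∈ range d, f e +
        ∑ d ∈ range N, f d * g d := by
  induction N with
  | zero => simp
  | succ N ih =>
    simp only [sum_range_succ]
    linear_combination ih

section ChenLevel

variable {Fq : Type} [Field Fq] [Fintype Fq] (p : ℕ) [CharP Fq p]

theorem Sd_mul_Sd {a b : ℕ} (ha : 0 < a) (hb : 0 < b) (d : ℕ) :
    Sd Fq [a] d * Sd Fq [b] d =
      Sd Fq [a + b] d +
        ∑ j ∈ Ioo 0 (a + b),
          if Fintype.card Fq - 1 ∣ j then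
            ZMod.castHom (dvd_refl p) (RatFunc Fq) (Del p a b (a + b - j) j) *
              Sd Fq [a + b - j, j] d
          else 0 := by
  classical
  set U : ℕ → RatFunc Fq := fun m => (if Fintype.card Fq - 1 ∣ m then -1 else 0) * Slt Fq [m] d
  have hx : ∀ c, algebraMap Fq[X] (RatFunc Fq) (monicOf Fq d c) ≠ 0 := fun c =>
    (map_ne_zero_iff _ (IsFractionRing.injective Fq[X] (RatFunc Fq))).2
      (monic_monicOf d c).ne_zero
  have hinj : Function.Injective fun c => algebraMap Fq[X] (RatFunc Fq) (monicOf Fq d c) :=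
    (IsFractionRing.injective Fq[X] (RatFunc Fq)).comp (monicOf_injective d)
  have hU (c : Fin d → Fq) (m : ℕ) (hm : m ≠ 0) := sum_erase_inv_monicOf_sub_pow hm d c
  have hreindex {a b : ℕ} (hb : b ≠ 0) :
      ∑ k ∈ range a, (-1) ^ k * (b.multichoose k : RatFunc Fq) * U (b + k) * Sd Fq [a - k] d =
        ∑ j ∈ Ioo 0 (a + b), ((j - 1).choose (b - 1) : RatFunc Fq) *
          ((-1) ^ (j + b) * U j * Sd Fq [a + b - j] d) := by
    rw [← sum_range_multichoose_mul hb]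
    refine sum_congr rfl fun k _ => ?_
    rw [show a + b - (b + k) = a - k by omega, show b + k + b = k + 2 * b by ring, pow_add,
      pow_mul, neg_one_sq, one_pow]
    ring
  simp only [Sd_singleton]
  rw [sum_inv_pow_mul_sum_inv_pow hx hinj hU ha.ne' hb.ne']
  simp only [← Sd_singleton]
  rw [hreindex hb.ne', hreindex ha.ne', add_comm b a, ← sum_add_distrib]
  congr 1
  refine sum_congr rfl fun j _ => ?_
  by_cases hdvd : Fintype.card Fq - 1 ∣ j
  · have hsign : (-1 : RatFunc Fq) ^ j = 1 := neg_one_pow_eq_one_of_card_sub_one_dvd hdvd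
    have hpow {n : ℕ} (hn : 0 < n) : (-1 : RatFunc Fq) ^ n = -(-1) ^ (n - 1) := by
      conv_lhs => rw [← Nat.sub_add_cancel hn, pow_succ, mul_neg_one]
    simp only [U, if_pos hdvd, castHom_Del, Sd_cons (a + b - j) [j], pow_add, hsign]
    rw [hpow ha, hpow hb]
    ring
  · simp [U, hdvd]

theorem Slt_mul_Slt {a b : ℕ} (ha : 0 < a) (hb : 0 < b) (N : ℕ) :
    Slt Fq [a] N * Slt Fq [b] N =
      Slt Fq [a, b] N + Slt Fq [b, a] N + Slt Fq [a + b] N +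
        ∑ j ∈ Ioo 0 (a + b),
          if Fintype.card Fq - 1 ∣ j then
            ZMod.castHom (dvd_refl p) (RatFunc Fq) (Del p a b (a + b - j) j) *
              Slt Fq [a + b - j, j] N
          else 0 := by
  simp only [← sum_range_Sd]
  rw [sum_range_mul_sum_range]
  simp only [sum_range_Sd, ← Sd_cons, Sd_mul_Sd p ha hb, sum_add_distrib, add_assoc]
  rw [sum_comm]
  congr 3
  refine sum_congr rfl fun j _ => ?_
  split_ifs
  · rw [← mul_sum, sum_range_Sd]
  · exact sum_const_zero

end ChenLevel

section Convergence

lemma exp_neg_natCast_le_one (d : ℕ) : exp (-(d : ℤ)) ≤ 1 := by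
  rw [← exp_zero, exp_le_exp]
  omega

variable {Fq : Type} [Field Fq] [DecidableEq (RatFunc Fq)]

lemma inftyValuation_inv_monicOf (d : ℕ) (c : Fin d → Fq) :
    RatFunc.inftyValuation Fq (algebraMap Fq[X] (RatFunc Fq) (monicOf Fq d c))⁻¹ =
      exp (-(d : ℤ)) := by
  rw [map_inv₀, RatFunc.inftyValuation_apply,
    RatFunc.inftyValuation.polynomial Fq (monic_monicOf d c).ne_zero, natDegree_monicOf, exp_neg]

variable [Fintype Fq]

instance : CompleteSpace (RatFunc.CompletionAtInfty Fq) :=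
  letI := RatFunc.inftyValued Fq
  UniformSpace.Completion.completeSpace (RatFunc Fq)

lemma valued_v_toInfty (x : RatFunc Fq) : Valued.v (toInfty Fq x) = RatFunc.inftyValuation Fq x :=
  letI := RatFunc.inftyValued Fq
  Valued.valuedCompletion_apply x

lemma inftyValuation_Slt_le_one (l : List ℕ) (N : ℕ) :
    RatFunc.inftyValuation Fq (Slt Fq l N) ≤ 1 := by
  induction l generalizing N with
  | nil => simp [Slt]
  | cons n l ih =>
    refine Valuation.map_sum_le _ fun d _ => Valuation.map_sum_le _ fun c _ => ?_
    rw [map_mul, map_pow, inftyValuation_inv_monicOf]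
    exact mul_le_one' (pow_le_one' (exp_neg_natCast_le_one d) n) (ih d)

lemma inftyValuation_Sd_le {n : ℕ} (hn : n ≠ 0) (l : List ℕ) (d : ℕ) :
    RatFunc.inftyValuation Fq (Sd Fq (n :: l) d) ≤ exp (-(d : ℤ)) := by
  rw [Sd_cons, map_mul]
  refine (mul_le_of_le_one_right' (inftyValuation_Slt_le_one l d)).trans ?_
  rw [Sd_singleton]
  refine Valuation.map_sum_le _ fun c _ => ?_
  rw [map_pow, inftyValuation_inv_monicOf]
  exact pow_le_of_le_one zero_le (exp_neg_natCast_le_one d) hn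

theorem tendsto_Slt_zetaA {n : ℕ} (hn : n ≠ 0) (l : List ℕ) :
    Tendsto (fun N => toInfty Fq (Slt Fq (n :: l) N)) atTop (𝓝 (zetaA Fq (n :: l))) := by
  have h0 : Tendsto (fun d => toInfty Fq (Sd Fq (n :: l) d)) atTop (𝓝 0) :=
    Valued.tendsto_zero_of_v_le_exp_neg fun d =>
      (valued_v_toInfty _).trans_le (inftyValuation_Sd_le hn l d)
  have := Valued.nonarchimedeanAddGroup (R := RatFunc.CompletionAtInfty Fq)
  have hs := NonarchimedeanAddGroup.summable_of_tendsto_cofinite_zero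
    (Nat.cofinite_eq_atTop ▸ h0)
  have hlim := hs.hasSum.tendsto_sum_nat
  simp only [← map_sum, sum_range_Sd] at hlim
  exact hlim

end Convergence

theorem chen_formula_general (Fq : Type) [Field Fq] [Fintype Fq] [DecidableEq (RatFunc Fq)]
    (p : ℕ) [CharP Fq p]
    (a b : ℕ) (ha : 0 < a) (hb : 0 < b) :
    zetaA Fq [a] * zetaA Fq [b] =
      zetaA Fq [a, b] + zetaA Fq [b, a] + zetaA Fq [a + b] +
        ∑ j ∈ Finset.Ioo 0 (a + b),
          if (Fintype.card Fq - 1) ∣ j then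
            ZMod.castHom (dvd_refl p) (RatFunc.CompletionAtInfty Fq) (Del p a b (a + b - j) j) *
              zetaA Fq [a + b - j, j]
          else 0 := by
  have hcast (x : ZMod p) : toInfty Fq (ZMod.castHom (dvd_refl p) (RatFunc Fq) x) =
      ZMod.castHom (dvd_refl p) (RatFunc.CompletionAtInfty Fq) x :=
    RingHom.congr_fun (RingHom.ext_zmod ((toInfty Fq).comp (ZMod.castHom (dvd_refl p) _)) _) x
  refine tendsto_nhds_unique ((tendsto_Slt_zetaA ha.ne' []).mul (tendsto_Slt_zetaA hb.ne' [])) ?_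
  simp only [← map_mul (toInfty Fq), Slt_mul_Slt p ha hb, map_add, map_sum,
    apply_ite (toInfty Fq), map_mul, map_zero, hcast]
  refine (((tendsto_Slt_zetaA ha.ne' [b]).add (tendsto_Slt_zetaA hb.ne' [a])).add
    (tendsto_Slt_zetaA (by omega) [])).add (tendsto_finsetSum _ fun j hj => ?_)
  split_ifs
  · exact (tendsto_Slt_zetaA (by simp at hj; omega) [j]).const_mul _
  · exact tendsto_const_nhds

/-- **Chen's formula.** For `a, b ∈ ℕ` (positive),
`ζ_A(a) ζ_A(b) = ζ_A(a,b) + ζ_A(b,a) + ζ_A(a+b) + ∑_{i+j=a+b, i,j≥1, (q-1)∣j} Δ^{i,j}_{a,b} ζ_A(i,j)`. -/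
theorem chen_formula (Fq : Type) [Field Fq] [Fintype Fq] [DecidableEq (RatFunc Fq)]
    (p : ℕ) [Fact p.Prime] [CharP Fq p]
    (a b : ℕ) (ha : 0 < a) (hb : 0 < b) :
    zetaA Fq [a] * zetaA Fq [b] =
      zetaA Fq [a, b] + zetaA Fq [b, a] + zetaA Fq [a + b] +
        ∑ j ∈ Finset.Ioo 0 (a + b),
          if (Fintype.card Fq - 1) ∣ j then
            ZMod.castHom (dvd_refl p) (RatFunc.CompletionAtInfty Fq) (Del p a b (a + b - j) j) *
              zetaA Fq [a + b - j, j]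
          else 0 :=
  chen_formula_general Fq p a b ha hb
end

section
/- Let R be an integral domain with fraction field F, and let f, g ∈ R be nonzero elements with f ≠ g. Then for all positive integers a, b, the following partial fraction decomposition holds in F: 1/(f^a·g^b) = Σ_{i+j=a+b, i,j ≥ 1} (1/(f−g)^j)·((−1)^b·C(j−1,b−1)/f^i + (−1)^{j−a}·C(j−1,a−1)/g^i), where C(m,n) denotes the integer binomial coefficient (mapped into F via the canonical ring map ℤ → F). -/
/-!
Put `d = x - y`. The terms with `j < b` vanish, and reindexing by `j = b + k` the `x`-part is
`(-1)^b ∑_{k<a} multichoose b k / (d^(b+k) x^(a-k))`, the principal part at `x = 0` of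
`1 / (x^a (x - d)^b)`, and the `y`-part is the same expression with `(x, a)` and `(y, b)`
exchanged and `d` replaced by `-d`. In this form the identity also holds when `a = 0` or
`b = 0` (as `multichoose 0 k` vanishes for `k ≠ 0`), and Pascal's rule for `multichoose`
matches `1 / (x^(a+1) y^(b+1)) = (1 / (x^a y^(b+1)) - 1 / (x^(a+1) y^b)) / d`,
so a double induction on `a` and `b` proves it.
-/

open Finset

namespace PartialFractions

variable {F : Type*} [Field F]

def principalPart (x d : F) (a b : ℕ) : F :=
  ∑ k ∈ range a, (-1) ^ b * (b.multichoose k : F) / (d ^ (b + k) * x ^ (a - k))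

lemma principalPart_zero_left (x d : F) (b : ℕ) : principalPart x d 0 b = 0 := by
  simp [principalPart]

lemma principalPart_succ_zero (x d : F) (a : ℕ) :
    principalPart x d (a + 1) 0 = 1 / x ^ (a + 1) := by
  simp [principalPart, sum_range_succ']

lemma mul_principalPart_succ_succ {d : F} (hd : d ≠ 0) (x : F) (a b : ℕ) :
    d * principalPart x d (a + 1) (b + 1) =
      principalPart x d a (b + 1) - principalPart x d (a + 1) b := by
  simp only [principalPart, sum_range_succ' _ a, mul_add, mul_sum]
  rw [← sub_sub, ← sum_sub_distrib, sub_eq_add_neg]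
  congr 1
  · refine sum_congr rfl fun k _ => ?_
    rw [Nat.multichoose_succ_succ]
    simp only [Nat.add_sub_add_right, Nat.cast_add, pow_succ]
    field_simp
    ring
  · simp only [Nat.multichoose_zero_right, Nat.cast_one, pow_succ]
    field_simp
    ring

theorem one_div_pow_mul_pow_eq_principalPart_add {x y : F} (hx : x ≠ 0) (hy : y ≠ 0)
    (hxy : x ≠ y) {a b : ℕ} (hab : a ≠ 0 ∨ b ≠ 0) :
    1 / (x ^ a * y ^ b) = principalPart x (x - y) a b + principalPart y (y - x) b a := by
  induction a generalizing b with
  | zero =>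
    obtain ⟨b, rfl⟩ := Nat.exists_eq_succ_of_ne_zero (hab.resolve_left (by simp))
    simp [principalPart_zero_left, principalPart_succ_zero]
  | succ a iha =>
    induction b with
    | zero => simp [principalPart_zero_left, principalPart_succ_zero]
    | succ b ihb =>
      have hd : x - y ≠ 0 := sub_ne_zero.2 hxy
      have hstep : (x - y) * (1 / (x ^ (a + 1) * y ^ (b + 1))) =
          1 / (x ^ a * y ^ (b + 1)) - 1 / (x ^ (a + 1) * y ^ b) := by
        field_simp
        ring
      rw [iha (Or.inr b.succ_ne_zero), ihb (Or.inl a.succ_ne_zero)] at hstep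
      apply mul_left_cancel₀ hd
      linear_combination hstep - mul_principalPart_succ_succ hd x a b +
        mul_principalPart_succ_succ (sub_ne_zero.2 hxy.symm) y b a

lemma sum_Ioo_choose_div_eq_principalPart (x d : F) (a : ℕ) {b : ℕ} (hb : b ≠ 0) :
    ∑ j ∈ Ioo 0 (a + b),
        1 / d ^ j * ((-1) ^ b * ((j - 1).choose (b - 1) : F) / x ^ (a + b - j)) =
      principalPart x d a b := by
  obtain ⟨c, rfl⟩ : ∃ c, b = c + 1 := ⟨b - 1, by omega⟩
  have hsub : Ico (c + 1) (a + (c + 1)) ⊆ Ioo 0 (a + (c + 1)) := fun j hj => by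
    simp only [mem_Ico, mem_Ioo] at hj ⊢
    omega
  rw [← sum_subset hsub fun j hj hj' => ?vanish, sum_Ico_eq_sum_range, Nat.add_sub_cancel]
  case vanish =>
    simp only [mem_Ico, mem_Ioo] at hj hj'
    rw [Nat.choose_eq_zero_of_lt (by omega)]
    simp
  refine sum_congr rfl fun k _ => ?_
  rw [Nat.multichoose_eq, show c + 1 + k - 1 = c + k by omega,
    show a + (c + 1) - (c + 1 + k) = a - k by omega, Nat.add_sub_cancel, Nat.choose_symm_add]
  ring

lemma one_div_sub_pow_mul_neg_one_pow (x y c z : F) (j a : ℕ) :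
    1 / (y - x) ^ j * ((-1) ^ a * c / z) = 1 / (x - y) ^ j * ((-1) ^ ((j : ℤ) - a) * c / z) := by
  rw [← neg_sub, neg_pow, zpow_sub₀ (neg_ne_zero.2 one_ne_zero), zpow_natCast, zpow_natCast]
  field_simp
  simp only [← pow_mul, pow_mul', neg_one_sq, one_pow]

end PartialFractions

open PartialFractions in
theorem partial_fraction_decomposition_general
    (R : Type*) [CommRing R]
    (F : Type*) [Field F] [Algebra R F] [IsFractionRing R F]
    (f g : R) (hf : f ≠ 0) (hg : g ≠ 0) (hfg : f ≠ g)
    (a b : ℕ) (ha : 0 < a) (hb : 0 < b) :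
    1 / (algebraMap R F f ^ a * algebraMap R F g ^ b) =
      ∑ j ∈ Finset.Ioo 0 (a + b),
        (1 / (algebraMap R F f - algebraMap R F g) ^ j) *
          (((-1 : F) ^ b * ((j - 1).choose (b - 1) : F) / algebraMap R F f ^ (a + b - j)) +
            ((-1 : F) ^ ((j : ℤ) - (a : ℤ)) * ((j - 1).choose (a - 1) : F) /
              algebraMap R F g ^ (a + b - j))) := by
  have hinj := IsFractionRing.injective R F
  rw [one_div_pow_mul_pow_eq_principalPart_add (map_zero (algebraMap R F) ▸ hinj.ne hf)
      (map_zero (algebraMap R F) ▸ hinj.ne hg) (hinj.ne hfg) (Or.inl ha.ne'),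
    ← sum_Ioo_choose_div_eq_principalPart _ _ a hb.ne',
    ← sum_Ioo_choose_div_eq_principalPart _ _ b ha.ne', add_comm b a, ← sum_add_distrib]
  simp only [one_div_sub_pow_mul_neg_one_pow, mul_add]

/-- **Partial fraction decomposition.**
Let `R` be an integral domain with fraction field `F`, and `f, g ∈ R` nonzero with `f ≠ g`.
For all positive integers `a, b`:
`1/(f^a g^b) = ∑_{i+j=a+b, i,j ≥ 1} (1/(f-g)^j) ((-1)^b C(j-1,b-1)/f^i + (-1)^{j-a} C(j-1,a-1)/g^i)`,
where `i = a + b - j`. -/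
theorem partial_fraction_decomposition
    (R : Type*) [CommRing R] [IsDomain R]
    (F : Type*) [Field F] [Algebra R F] [IsFractionRing R F]
    (f g : R) (hf : f ≠ 0) (hg : g ≠ 0) (hfg : f ≠ g)
    (a b : ℕ) (ha : 0 < a) (hb : 0 < b) :
    1 / (algebraMap R F f ^ a * algebraMap R F g ^ b) =
      ∑ j ∈ Finset.Ioo 0 (a + b),
        (1 / (algebraMap R F f - algebraMap R F g) ^ j) *
          (((-1 : F) ^ b * ((j - 1).choose (b - 1) : F) / algebraMap R F f ^ (a + b - j)) +
            ((-1 : F) ^ ((j : ℤ) - (a : ℤ)) * ((j - 1).choose (a - 1) : F) /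
              algebraMap R F g ^ (a + b - j))) :=
  partial_fraction_decomposition_general R F f g hf hg hfg a b ha hb
end

section
/- The q-shuffle product * on 𝓔 is commutative: 𝔞 * 𝔟 = 𝔟 * 𝔞 for all 𝔞, 𝔟 ∈ 𝓔. In particular, (𝓔, *) is a commutative (not necessarily associative) 𝔽_p-algebra with unit 1. -/
/-- A word of the monoid `𝒯` (the free monoid on the letters `x_k, y_ℓ`, `k, ℓ ∈ ℕ+`,
modulo the commutation relations `x_k y_ℓ = y_ℓ x_k`): since every `x`-letter commutes with
every `y`-letter, a word has the unique normal form `x_𝔲 y_𝔳`, and is encoded as the pair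
of lists `(𝔲, 𝔳)`. -/
abbrev EWord := List ℕ+ × List ℕ+

/-- The `𝔽_p`-vector space `𝓔` with basis `𝒯`. -/
abbrev ESp (p : ℕ) := EWord →₀ ZMod p

/-- The basis word `x_𝔲 y_𝔳` of `𝓔`. -/
noncomputable def ew (p : ℕ) (z : EWord) : ESp p := Finsupp.single z 1

/-- Left concatenation by the letter `x_a`, extended `𝔽_p`-linearly. -/
noncomputable def xcons (p : ℕ) (a : ℕ+) (r : ESp p) : ESp p :=
  Finsupp.mapDomain (fun z => (a :: z.1, z.2)) r

/-- Left concatenation by the letter `y_a`, extended `𝔽_p`-linearly. -/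
noncomputable def ycons (p : ℕ) (a : ℕ+) (r : ESp p) : ESp p :=
  Finsupp.mapDomain (fun z => (z.1, a :: z.2)) r

/-- `∑_{i+j = a+b, i,j ≥ 1, (q-1) ∣ j} f i j`. -/
noncomputable def decSum {M : Type*} [AddCommMonoid M] (q : ℕ) (a b : ℕ+)
    (f : ℕ+ → ℕ+ → M) : M :=
  ∑ j ∈ (Finset.Ioo 0 ((a : ℕ) + (b : ℕ))).attach,
    if (q - 1) ∣ (j : ℕ) then
      f ⟨(a : ℕ) + (b : ℕ) - (j : ℕ), by
            have h := Finset.mem_Ioo.mp j.2; omega⟩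
        ⟨(j : ℕ), (Finset.mem_Ioo.mp j.2).1⟩
    else 0

/-- Fuelled version of the `q`-shuffle product `*` on `𝓔`, on basis words, following the
inductive definition (induction on the sum of the depths):
(1) `1 * 𝔞 = 𝔞 * 1 = 𝔞`;
(2) `x_𝔞 * y_𝔟 = x_𝔞 y_𝔟 = y_𝔟 x_𝔞 = y_𝔟 * x_𝔞`;
(3) `x_𝔞 * x_𝔟 = x_{a₁}(x_{𝔞⁽¹⁾} * x_𝔟) + x_{b₁}(x_𝔞 * x_{𝔟⁽¹⁾}) + x_{a₁+b₁}(x_{𝔞⁽¹⁾} * x_{𝔟⁽¹⁾})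
     + ∑_{i+j=a₁+b₁, (q-1)∣j} Δ^{i,j}_{a₁,b₁} x_i((x_{𝔞⁽¹⁾} * x_{𝔟⁽¹⁾}) * x_j)`;
(4) `y_𝔞 * y_𝔟 = y_{a₁}(y_{𝔞⁽¹⁾} * y_𝔟) + y_{b₁}(y_𝔞 * y_{𝔟⁽¹⁾}) + y_{a₁+b₁}(y_{𝔞⁽¹⁾} * y_{𝔟⁽¹⁾})
     + ∑_{i+j=a₁+b₁, (q-1)∣j} Δ^{i,j}_{a₁,b₁} y_i((y_{𝔞⁽¹⁾} * y_{𝔟⁽¹⁾}) * x_j)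
     + ∑_{i+j=a₁+b₁, (q-1)∣j} Δ^{i,j}_{a₁,b₁} y_i((y_{𝔞⁽¹⁾} * y_{𝔟⁽¹⁾}) * y_j)`;
(5) `(x_𝔞 y_𝔟) * (x_{𝔞'} y_{𝔟'}) = (x_𝔞 * x_{𝔞'}) * (y_𝔟 * y_{𝔟'})`,
with `*` extended `𝔽_p`-bilinearly.  For sufficient fuel (which `mulE` below always
supplies) the recursion terminates, since each step strictly decreases the total depth. -/
noncomputable def mulF (p q : ℕ) : ℕ → EWord → EWord → ESp p
  | 0, _, _ => 0
  | _ + 1, ([], []), z => ew p z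
  | _ + 1, w, ([], []) => ew p w
  | _ + 1, (u, []), ([], v) => ew p (u, v)
  | _ + 1, ([], v), (u, []) => ew p (u, v)
  | n + 1, (a :: as, []), (b :: bs, []) =>
      xcons p a (mulF p q n (as, []) (b :: bs, [])) +
        xcons p b (mulF p q n (a :: as, []) (bs, [])) +
        xcons p (a + b) (mulF p q n (as, []) (bs, [])) +
        decSum q a b (fun i j =>
          Del p (a : ℕ) (b : ℕ) (i : ℕ) (j : ℕ) •
            xcons p i ((mulF p q n (as, []) (bs, [])).sum fun w c => c • mulF p q n w ([j], [])))
  | n + 1, ([], a :: as), ([], b :: bs) =>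
      ycons p a (mulF p q n ([], as) ([], b :: bs)) +
        ycons p b (mulF p q n ([], a :: as) ([], bs)) +
        ycons p (a + b) (mulF p q n ([], as) ([], bs)) +
        decSum q a b (fun i j =>
          Del p (a : ℕ) (b : ℕ) (i : ℕ) (j : ℕ) •
            ycons p i ((mulF p q n ([], as) ([], bs)).sum fun w c =>
              c • mulF p q n w ([j], []))) +
        decSum q a b (fun i j =>
          Del p (a : ℕ) (b : ℕ) (i : ℕ) (j : ℕ) •
            ycons p i ((mulF p q n ([], as) ([], bs)).sum fun w c =>
              c • mulF p q n w ([], [j])))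
  | n + 1, (u, v), (u', v') =>
      (mulF p q n (u, []) (u', [])).sum fun w c =>
        (mulF p q n ([], v) ([], v')).sum fun z e => (c * e) • mulF p q n w z

/-- The `q`-shuffle product of two basis words of `𝓔`.  The fuel
`2 (|𝔲| + |𝔳| + |𝔲'| + |𝔳'|) + 8` always suffices for the recursion. -/
noncomputable def mulW (p q : ℕ) (w z : EWord) : ESp p :=
  mulF p q (2 * (w.1.length + w.2.length + z.1.length + z.2.length) + 8) w z

/-- The `q`-shuffle product `*` on `𝓔`, the `𝔽_p`-bilinear extension of `mulW`. -/
noncomputable def mulE (p q : ℕ) (r s : ESp p) : ESp p :=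
  r.sum fun w c => s.sum fun z e => (c * e) • mulW p q w z

/-! Every clause of the recursive definition of `*` is symmetric under exchanging the two
factors: `Δ^{i,j}_{a,b}`, `a + b` and the range `i + j = a + b` are symmetric in `a, b`, and the
recursive calls come in pairs that are exchanged by swapping the factors. Hence commutativity on
basis words follows by induction on the fuel, and passes to `𝓔` by bilinearity. The empty word is
a left unit by clause (1), so by commutativity it is a two-sided unit. -/

section

variable (p q : ℕ)

theorem Del_comm (a b i j : ℕ) : Del p a b i j = Del p b a i j := add_comm _ _

theorem decSum_comm {M : Type*} [AddCommMonoid M] (a b : ℕ+) (f : ℕ+ → ℕ+ → M) :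
    decSum q a b f = decSum q b a f := by
  have hab : Finset.Ioo 0 ((a : ℕ) + b) = Finset.Ioo 0 ((b : ℕ) + a) := by rw [add_comm]
  unfold decSum
  refine Finset.sum_nbij' (fun j => ⟨j, hab ▸ j.prop⟩) (fun j => ⟨j, hab.symm ▸ j.prop⟩)
    (by simp) (by simp) (by simp) (by simp) fun j _ => ?_
  simp_rw [add_comm (b : ℕ) (a : ℕ)]

theorem mulF_succ_one_left (n : ℕ) (z : EWord) : mulF p q (n + 1) ([], []) z = ew p z := by
  rcases z with ⟨_ | _, _ | _⟩ <;> simp [mulF]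

theorem mulF_comm (n : ℕ) (w z : EWord) : mulF p q n w z = mulF p q n z w := by
  induction n generalizing w z with
  | zero => rfl
  | succ n ih =>
    rcases w with ⟨_ | ⟨a, as⟩, _ | ⟨c, cs⟩⟩ <;> rcases z with ⟨_ | ⟨b, bs⟩, _ | ⟨d, ds⟩⟩ <;>
      simp only [mulF, ih, Del_comm p, decSum_comm q, add_comm (_ : ℕ+)] <;> abel

theorem mulW_comm (w z : EWord) : mulW p q w z = mulW p q z w := by
  rw [mulW, mulW, mulF_comm]
  congr 2
  omega

theorem mulW_one_left (z : EWord) : mulW p q ([], []) z = ew p z :=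
  mulF_succ_one_left p q _ z

theorem mulE_ew_left (w : EWord) (r : ESp p) :
    mulE p q (ew p w) r = r.sum fun z e => e • mulW p q w z := by
  rw [mulE, ew, Finsupp.sum_single_index (by simp)]
  simp only [one_mul]

end

theorem mulE_comm_general (p q : ℕ) :
    (∀ r s : ESp p, mulE p q r s = mulE p q s r) ∧
      (∀ r : ESp p, mulE p q (ew p ([], [])) r = r ∧ mulE p q r (ew p ([], [])) = r) := by
  have comm (r s : ESp p) : mulE p q r s = mulE p q s r := by
    rw [mulE, mulE, Finsupp.sum_comm]
    simp only [mul_comm, mulW_comm]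
  have one_left (r : ESp p) : mulE p q (ew p ([], [])) r = r := by
    rw [mulE_ew_left]
    simp only [mulW_one_left, ew, Finsupp.smul_single, smul_eq_mul, mul_one]
    exact r.sum_single
  exact ⟨comm, fun r => ⟨one_left r, (comm r _).trans (one_left r)⟩⟩

/-- **Commutativity of the `q`-shuffle product.** `𝔞 * 𝔟 = 𝔟 * 𝔞` for all `𝔞, 𝔟 ∈ 𝓔`;
in particular `(𝓔, *)` is a commutative (not necessarily associative) `𝔽_p`-algebra
with unit `1` (the empty word). -/
theorem mulE_comm (p q : ℕ) [Fact p.Prime] (n : ℕ) (hn : 0 < n) (hq : q = p ^ n) :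
    (∀ r s : ESp p, mulE p q r s = mulE p q s r) ∧
      (∀ r : ESp p, mulE p q (ew p ([], [])) r = r ∧ mulE p q r (ew p ([], [])) = r) :=
  mulE_comm_general p q
end
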